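/- For every k ∈ ℕ, the Fock function ψ_k is a smooth solution of the time-independent Schrödinger equation of the quantum harmonic oscillator with energy level w_k = k + 1/2: for all x ∈ ℝ, −(1/2) ψ_k''(x) + (x²/2) ψ_k(x) = (k + 1/2) ψ_k(x). -/

import Mathlib

/-- The physicists' Hermite polynomial `H_k(x) = (−1)^k e^{x²} (d^k/dx^k) e^{−x²}`. -/
noncomputable def hermiteP (k : ℕ) (x : ℝ) : ℝ :=
  (-1 : ℝ) ^ k * Real.exp (x ^ 2) * iteratedDeriv k (fun y => Real.exp (-y ^ 2)) x

/-- The `k`-th Fock function `ψ_k(x) = (√π 2^k k!)^{−1/2} H_k(x) e^{−x²/2}`. -/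
noncomputable def fock (k : ℕ) (x : ℝ) : ℝ :=
  (Real.sqrt (Real.sqrt Real.pi * 2 ^ k * Nat.factorial k))⁻¹ * hermiteP k x *
    Real.exp (-x ^ 2 / 2)

open Polynomial

/-- Evaluation of a real polynomial is smooth. -/
lemma contDiff_polyeval (q : ℝ[X]) : ContDiff ℝ (⊤ : ℕ∞) fun x : ℝ => q.eval x := by
  induction q using Polynomial.induction_on' with
  | add p q hp hq => simpa [Polynomial.eval_add] using hp.add hq
  | monomial n a =>
      simpa [Polynomial.eval_monomial] using contDiff_const.mul (contDiff_id.pow n)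

lemma contDiff_aeval_int (q : ℤ[X]) : ContDiff ℝ (⊤ : ℕ∞) fun x : ℝ => (Polynomial.aeval x q : ℝ) := by
  have : (fun x : ℝ => (Polynomial.aeval x q : ℝ)) =
      fun x : ℝ => (q.map (algebraMap ℤ ℝ)).eval x := by
    funext x
    rw [Polynomial.eval_map, Polynomial.aeval_def]
  rw [this]
  exact contDiff_polyeval _

/-- The derivative of the (probabilists') Hermite polynomial. -/
lemma derivative_hermite (n : ℕ) :
    derivative (hermite (n + 1)) = ((n : ℤ[X]) + 1) * hermite n := by
  induction n with
  | zero => simp [hermite_one, hermite_zero]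
  | succ n ih =>
      rw [hermite_succ (n + 1)]
      rw [derivative_sub, derivative_mul, derivative_X, one_mul, ih, derivative_mul]
      simp only [derivative_add, derivative_natCast, derivative_one, add_zero, zero_mul,
        zero_add]
      rw [hermite_succ n]
      push_cast
      ring

lemma second_derivative_hermite (k : ℕ) :
    derivative (derivative (hermite k)) =
      X * derivative (hermite k) - (k : ℤ[X]) * hermite k := by
  cases k with
  | zero => simp [hermite_zero]
  | succ n =>
      have h2 := derivative_hermite (n + 1)
      rw [hermite_succ (n + 1), derivative_sub, derivative_mul, derivative_X, one_mul] at h2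
      push_cast at h2 ⊢
      linear_combination -h2

/-- The physicists' Hermite polynomial equals a scaled probabilists' Hermite polynomial. -/
lemma hermiteP_eq (k : ℕ) (x : ℝ) :
    hermiteP k x = Real.sqrt 2 ^ k * (Polynomial.aeval (Real.sqrt 2 * x) (hermite k) : ℝ) := by
  have hs : (Real.sqrt 2 : ℝ) ^ 2 = 2 := Real.sq_sqrt (by norm_num)
  have hg : ContDiff ℝ (k : ℕ∞) fun t : ℝ => Real.exp (-(t ^ 2 / 2)) :=
    (Real.contDiff_exp.comp (((contDiff_id.pow 2).div_const 2).neg)).of_le le_top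
  have hcomp : (fun y : ℝ => Real.exp (-y ^ 2)) =
      fun y : ℝ => (fun t : ℝ => Real.exp (-(t ^ 2 / 2))) (Real.sqrt 2 * y) := by
    funext y
    congr 1
    rw [mul_pow, hs]
    ring
  have h1 : iteratedDeriv k (fun y : ℝ => Real.exp (-y ^ 2)) x =
      Real.sqrt 2 ^ k * iteratedDeriv k (fun t : ℝ => Real.exp (-(t ^ 2 / 2))) (Real.sqrt 2 * x) := by
    rw [hcomp]
    rw [iteratedDeriv_comp_const_mul hg]
  have h2 : iteratedDeriv k (fun t : ℝ => Real.exp (-(t ^ 2 / 2))) (Real.sqrt 2 * x) =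
      (-1 : ℝ) ^ k * (Polynomial.aeval (Real.sqrt 2 * x) (hermite k) : ℝ) *
        Real.exp (-((Real.sqrt 2 * x) ^ 2 / 2)) := by
    rw [iteratedDeriv_eq_iterate]
    exact Polynomial.deriv_gaussian_eq_hermite_mul_gaussian k _
  have h3 : Real.exp (-((Real.sqrt 2 * x) ^ 2 / 2)) = Real.exp (-x ^ 2) := by
    congr 1
    rw [mul_pow, hs]
    ring
  rw [hermiteP, h1, h2, h3]
  have hx : Real.exp (x ^ 2) * Real.exp (-x ^ 2) = 1 := by
    rw [← Real.exp_add]; simp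
  have hneg : ((-1 : ℝ) ^ k) * ((-1 : ℝ) ^ k) = 1 := by
    rw [← pow_add]; exact Even.neg_one_pow ⟨k, by ring⟩
  have : (-1 : ℝ) ^ k * Real.exp (x ^ 2) *
      (Real.sqrt 2 ^ k * ((-1 : ℝ) ^ k * (Polynomial.aeval (Real.sqrt 2 * x) (hermite k) : ℝ) *
        Real.exp (-x ^ 2))) =
    (((-1 : ℝ) ^ k * (-1 : ℝ) ^ k) * (Real.exp (x ^ 2) * Real.exp (-x ^ 2))) *
      (Real.sqrt 2 ^ k * (Polynomial.aeval (Real.sqrt 2 * x) (hermite k) : ℝ)) := by ring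
  rw [this, hneg, hx, one_mul, one_mul]

noncomputable def fockC (k : ℕ) : ℝ :=
  (Real.sqrt (Real.sqrt Real.pi * 2 ^ k * Nat.factorial k))⁻¹ * Real.sqrt 2 ^ k

/-- Closed form of the Fock function. -/
lemma fock_eq (k : ℕ) (x : ℝ) :
    fock k x = fockC k * (Polynomial.aeval (Real.sqrt 2 * x) (hermite k) : ℝ) *
      Real.exp (-x ^ 2 / 2) := by
  rw [fock, hermiteP_eq, fockC]
  ring

noncomputable def fockD (k : ℕ) (x : ℝ) : ℝ :=
  fockC k * ((Real.sqrt 2 * (Polynomial.aeval (Real.sqrt 2 * x) (derivative (hermite k)) : ℝ)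
      - x * (Polynomial.aeval (Real.sqrt 2 * x) (hermite k) : ℝ)) * Real.exp (-x ^ 2 / 2))

lemma hasDerivAt_aeval_scaled (q : ℤ[X]) (x : ℝ) :
    HasDerivAt (fun y : ℝ => (Polynomial.aeval (Real.sqrt 2 * y) q : ℝ))
      (Real.sqrt 2 * (Polynomial.aeval (Real.sqrt 2 * x) (derivative q) : ℝ)) x := by
  have h1 : HasDerivAt (fun t : ℝ => (Polynomial.aeval t q : ℝ))
      (Polynomial.aeval (Real.sqrt 2 * x) (derivative q) : ℝ) (Real.sqrt 2 * x) :=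
    q.hasDerivAt_aeval (Real.sqrt 2 * x)
  have h2 : HasDerivAt (fun y : ℝ => Real.sqrt 2 * y) (Real.sqrt 2) x := by
    simpa using (hasDerivAt_id x).const_mul (Real.sqrt 2)
  have := h1.comp x h2
  refine (this.congr_deriv (by ring)).congr_of_eventuallyEq ?_
  filter_upwards with y
  simp [Function.comp]

lemma hasDerivAt_gauss (x : ℝ) :
    HasDerivAt (fun y : ℝ => Real.exp (-y ^ 2 / 2)) (-x * Real.exp (-x ^ 2 / 2)) x := by
  have h : HasDerivAt (fun y : ℝ => -y ^ 2 / 2) (-x) x := by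
    have := ((hasDerivAt_pow 2 x).neg).div_const 2
    exact this.congr_deriv (by push_cast; ring)
  exact h.exp.congr_deriv (by ring)

lemma hasDerivAt_fock (k : ℕ) (x : ℝ) : HasDerivAt (fock k) (fockD k x) x := by
  have h1 := hasDerivAt_aeval_scaled (hermite k) x
  have h2 := hasDerivAt_gauss x
  have h3 := (h1.mul h2).const_mul (fockC k)
  have h4 : HasDerivAt (fun y => fockC k *
      ((Polynomial.aeval (Real.sqrt 2 * y) (hermite k) : ℝ) * Real.exp (-y ^ 2 / 2)))
      (fockD k x) x :=
    h3.congr_deriv (by rw [fockD]; ring)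
  refine h4.congr_of_eventuallyEq ?_
  filter_upwards with y
  rw [fock_eq]
  ring

lemma hasDerivAt_fockD (k : ℕ) (x : ℝ) :
    HasDerivAt (fockD k) ((x ^ 2 - (2 * k + 1)) * fock k x) x := by
  have h1 := hasDerivAt_aeval_scaled (hermite k) x
  have h1' := hasDerivAt_aeval_scaled (derivative (hermite k)) x
  have h2 := hasDerivAt_gauss x
  have hx : HasDerivAt (fun y : ℝ => y) 1 x := hasDerivAt_id x
  have h4 := (((h1'.const_mul (Real.sqrt 2)).sub (hx.mul h1)).mul h2).const_mul (fockC k)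
  have hs : (Real.sqrt 2 : ℝ) ^ 2 = 2 := Real.sq_sqrt (by norm_num)
  have hsec : (Polynomial.aeval (Real.sqrt 2 * x) (derivative (derivative (hermite k))) : ℝ)
      = (Real.sqrt 2 * x) * (Polynomial.aeval (Real.sqrt 2 * x) (derivative (hermite k)) : ℝ)
        - (k : ℝ) * (Polynomial.aeval (Real.sqrt 2 * x) (hermite k) : ℝ) := by
    rw [second_derivative_hermite]
    simp
  have h5 : HasDerivAt (fun y => fockC k *
      ((Real.sqrt 2 * (Polynomial.aeval (Real.sqrt 2 * y) (derivative (hermite k)) : ℝ)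
        - y * (Polynomial.aeval (Real.sqrt 2 * y) (hermite k) : ℝ)) * Real.exp (-y ^ 2 / 2)))
      ((x ^ 2 - (2 * k + 1)) * fock k x) x := by
    refine h4.congr_deriv ?_
    simp only [Pi.sub_apply, Pi.mul_apply]
    rw [fock_eq, fockC]
    rw [hsec]
    linear_combination ((Real.sqrt (Real.sqrt Real.pi * 2 ^ k * Nat.factorial k))⁻¹ *
      Real.sqrt 2 ^ k * Real.exp (-x ^ 2 / 2) *
      (Real.sqrt 2 * x * (Polynomial.aeval (Real.sqrt 2 * x) (derivative (hermite k)) : ℝ) -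
        (k : ℝ) * (Polynomial.aeval (Real.sqrt 2 * x) (hermite k) : ℝ))) * hs
  refine h5.congr_of_eventuallyEq ?_
  filter_upwards with y
  rw [fockD]

/-- Each Fock function `ψ_k` is a smooth solution of the time-independent Schrödinger equation
of the quantum harmonic oscillator with energy `k + 1/2`:
`−(1/2)ψ_k'' + (x²/2)ψ_k = (k + 1/2)ψ_k`. -/
theorem fock_schrodinger (k : ℕ) :
    ContDiff ℝ (⊤ : ℕ∞) (fock k) ∧
    ∀ x : ℝ, -(1 / 2 : ℝ) * iteratedDeriv 2 (fock k) x + x ^ 2 / 2 * fock k x =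
      ((k : ℝ) + 1 / 2) * fock k x := by
  constructor
  · have : fock k = fun x => fockC k *
        (Polynomial.aeval (Real.sqrt 2 * x) (hermite k) : ℝ) * Real.exp (-x ^ 2 / 2) := by
      funext x; rw [fock_eq]
    rw [this]
    have hpoly : ContDiff ℝ (⊤ : ℕ∞) fun x : ℝ => (Polynomial.aeval (Real.sqrt 2 * x) (hermite k) : ℝ) :=
      (contDiff_aeval_int (hermite k)).comp (contDiff_const.mul contDiff_id)
    have hexp : ContDiff ℝ (⊤ : ℕ∞) fun x : ℝ => Real.exp (-x ^ 2 / 2) :=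
      Real.contDiff_exp.comp (((contDiff_id.pow 2).neg).div_const 2)
    exact (contDiff_const.mul hpoly).mul hexp
  · intro x
    have hd1 : deriv (fock k) = fockD k := by
      funext y; exact (hasDerivAt_fock k y).deriv
    have hd2 : deriv (fockD k) x = (x ^ 2 - (2 * k + 1)) * fock k x :=
      (hasDerivAt_fockD k x).deriv
    have h2 : iteratedDeriv 2 (fock k) x = (x ^ 2 - (2 * k + 1)) * fock k x := by
      rw [show (2 : ℕ) = 1 + 1 from rfl, iteratedDeriv_succ, iteratedDeriv_one, hd1, hd2]
    rw [h2]
    ring
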